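/- Let d be a positive natural number, let ρ be any (2d) × (2d) complex matrix regarded as an operator on ℂ² ⊗ ℂ^d, let μ_1, μ_2 be complex numbers with |μ_1| = |μ_2| = 1, let D = diag(μ_1, μ_2), and let σ_z = diag(1, −1). Then ‖ρ (D ⊗ₖ I_d) − (D ⊗ₖ I_d) ρ‖₁ = (|μ_1 − μ_2|/2) · ‖ρ (σ_z ⊗ₖ I_d) − (σ_z ⊗ₖ I_d) ρ‖₁. In particular, for D = diag(e^{iω}, e^{−iω}) the left-hand side equals |sin ω| times ‖ρ(σ_z ⊗ₖ I_d) − (σ_z ⊗ₖ I_d)ρ‖₁, and it is maximized exactly at the harmonic spectrum ω = π/2. -/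

import Mathlib

open Matrix Kronecker
open scoped ComplexOrder

open scoped Classical in
/-- The positive semidefinite square root of a matrix (junk value `0` if not PSD). -/
noncomputable def msqrt {n : Type*} [Fintype n] [DecidableEq n] (A : Matrix n n ℂ) : Matrix n n ℂ :=
  if h : A.PosSemidef then
    (h.1.eigenvectorUnitary : Matrix n n ℂ) * diagonal ((↑) ∘ Real.sqrt ∘ h.1.eigenvalues) *
      (star h.1.eigenvectorUnitary : Matrix n n ℂ)
  else 0

/-- Square-root fidelity `tr √(√ρ · σ · √ρ)` (as a real number). -/
noncomputable def sqrtFid {n : Type*} [Fintype n] [DecidableEq n] (ρ σ : Matrix n n ℂ) : ℝ :=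
  ((msqrt (msqrt ρ * σ * msqrt ρ)).trace).re

/-- Trace norm `tr √(Xᴴ X)` (as a real number). -/
noncomputable def traceNorm {n : Type*} [Fintype n] [DecidableEq n] (X : Matrix n n ℂ) : ℝ :=
  ((msqrt (Xᴴ * X)).trace).re

/-- The Bell-diagonal two-qubit state with Bell-basis eigenvalues `γ₁, γ₂, γ₃, γ₄`. -/
noncomputable def bellDiag (γ₁ γ₂ γ₃ γ₄ : ℝ) :
    Matrix (Fin 2 × Fin 2) (Fin 2 × Fin 2) ℂ :=
  Matrix.reindex finProdFinEquiv.symm finProdFinEquiv.symm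
    ((1 / 2 : ℂ) • !![(γ₁ : ℂ) + γ₂, 0, 0, (γ₁ : ℂ) - γ₂;
        0, (γ₃ : ℂ) + γ₄, (γ₃ : ℂ) - γ₄, 0;
        0, (γ₃ : ℂ) - γ₄, (γ₃ : ℂ) + γ₄, 0;
        (γ₁ : ℂ) - γ₂, 0, 0, (γ₁ : ℂ) + γ₂])

/-!
Split `D = diag(μ₁, μ₂)` into its scalar and traceless parts,
`D = ((μ₁ + μ₂) / 2) • 1 + ((μ₁ - μ₂) / 2) • σ_z`. The scalar part commutes with `ρ`, so
`[ρ, D ⊗ I] = ((μ₁ - μ₂) / 2) • [ρ, σ_z ⊗ I]`, and the trace norm is absolutely homogeneous.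
-/

lemma commutator_add_smul_one_add_smul {R A : Type*} [CommRing R] [Ring A] [Algebra R A]
    (ρ S : A) (a b : R) :
    ρ * (a • 1 + b • S) - (a • 1 + b • S) * ρ = b • (ρ * S - S * ρ) := by
  simp only [mul_add, add_mul, mul_smul_comm, smul_mul_assoc, mul_one, one_mul, smul_sub]
  abel

lemma Matrix.fin_two_diagonal_eq_smul_one_add_smul_pauliZ {K : Type*} [Field K] [NeZero (2 : K)]
    (μ₁ μ₂ : K) :
    !![μ₁, 0; 0, μ₂] = ((μ₁ + μ₂) / 2) • (1 : Matrix (Fin 2) (Fin 2) K)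
      + ((μ₁ - μ₂) / 2) • !![1, 0; 0, -1] := by
  ext i j
  fin_cases i <;> fin_cases j <;> simp <;> field_simp <;> ring

section TraceNorm

variable {n : Type*} [Fintype n] [DecidableEq n]

lemma msqrt_eq_cfc {A : Matrix n n ℂ} (hA : A.PosSemidef) : msqrt A = cfc Real.sqrt A := by
  rw [msqrt, dif_pos hA, hA.1.cfc_eq, IsHermitian.cfc, Unitary.conjStarAlgAut_apply]
  rfl

lemma msqrt_sq_smul {A : Matrix n n ℂ} (hA : A.PosSemidef) {r : ℝ} (hr : 0 ≤ r) :
    msqrt (((r ^ 2 : ℝ) : ℂ) • A) = (r : ℂ) • msqrt A := by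
  have hrA : (((r ^ 2 : ℝ) : ℂ) • A).PosSemidef := hA.smul (by exact_mod_cast sq_nonneg r)
  rw [msqrt_eq_cfc hrA, msqrt_eq_cfc hA, Complex.coe_smul, Complex.coe_smul,
    ← cfc_comp_const_mul (r ^ 2) Real.sqrt A (by fun_prop) hA.1.isSelfAdjoint,
    ← cfc_const_mul r Real.sqrt A (by fun_prop)]
  congr 1
  funext x
  rw [Real.sqrt_mul (sq_nonneg r), Real.sqrt_sq hr]

lemma traceNorm_smul (c : ℂ) (X : Matrix n n ℂ) : traceNorm (c • X) = ‖c‖ * traceNorm X := by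
  have hXX : (c • X)ᴴ * (c • X) = ((‖c‖ ^ 2 : ℝ) : ℂ) • (Xᴴ * X) := by
    rw [conjTranspose_smul, Matrix.smul_mul, Matrix.mul_smul, smul_smul, Complex.star_def,
      Complex.conj_mul']
    norm_cast
  rw [traceNorm, traceNorm, hXX, msqrt_sq_smul (posSemidef_conjTranspose_mul_self X)
    (norm_nonneg c), trace_smul, smul_eq_mul, Complex.re_ofReal_mul]

end TraceNorm

theorem traceNorm_commutator_diagonal_unimodular_general
    (d : ℕ)
    (ρ : Matrix (Fin 2 × Fin d) (Fin 2 × Fin d) ℂ)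
    (μ₁ μ₂ : ℂ) :
    traceNorm (ρ * (!![μ₁, 0; 0, μ₂] ⊗ₖ (1 : Matrix (Fin d) (Fin d) ℂ))
        - (!![μ₁, 0; 0, μ₂] ⊗ₖ (1 : Matrix (Fin d) (Fin d) ℂ)) * ρ)
      = (‖μ₁ - μ₂‖ / 2) *
        traceNorm (ρ * (!![1, 0; 0, -1] ⊗ₖ (1 : Matrix (Fin d) (Fin d) ℂ))
          - (!![1, 0; 0, -1] ⊗ₖ (1 : Matrix (Fin d) (Fin d) ℂ)) * ρ) := by
  have hD : !![μ₁, 0; 0, μ₂] ⊗ₖ (1 : Matrix (Fin d) (Fin d) ℂ)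
      = ((μ₁ + μ₂) / 2) • 1 + ((μ₁ - μ₂) / 2) • (!![1, 0; 0, -1] ⊗ₖ 1) := by
    rw [fin_two_diagonal_eq_smul_one_add_smul_pauliZ, add_kronecker, smul_kronecker,
      smul_kronecker, one_kronecker_one]
  rw [hD, commutator_add_smul_one_add_smul, traceNorm_smul, norm_div, Complex.norm_two]

theorem traceNorm_commutator_diagonal_unimodular
    (d : ℕ) (hd : 0 < d)
    (ρ : Matrix (Fin 2 × Fin d) (Fin 2 × Fin d) ℂ)
    (μ₁ μ₂ : ℂ) (h1 : ‖μ₁‖ = 1) (h2 : ‖μ₂‖ = 1) :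
    traceNorm (ρ * (!![μ₁, 0; 0, μ₂] ⊗ₖ (1 : Matrix (Fin d) (Fin d) ℂ))
        - (!![μ₁, 0; 0, μ₂] ⊗ₖ (1 : Matrix (Fin d) (Fin d) ℂ)) * ρ)
      = (‖μ₁ - μ₂‖ / 2) *
        traceNorm (ρ * (!![1, 0; 0, -1] ⊗ₖ (1 : Matrix (Fin d) (Fin d) ℂ))
          - (!![1, 0; 0, -1] ⊗ₖ (1 : Matrix (Fin d) (Fin d) ℂ)) * ρ) :=
  traceNorm_commutator_diagonal_unimodular_general d ρ μ₁ μ₂
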